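/- Let Z, η, U, T be random variables (all discrete for simplicity) with T = τ(Z). If Z ⊥ η | U and Z ⊥ U | T, then Z ⊥ η | T. -/

import Mathlib

open Classical in
noncomputable def pr {Ω : Type*} [Fintype Ω] (p : Ω → ℝ) (E : Ω → Prop) : ℝ :=
  ∑ ω, if E ω then p ω else 0

/-!
Since `T = τ(Z)`, the hypothesis `Z ⊥ η | U` passes to `T ⊥ η | U`. On the event `Z = z` with
`τ z = t`, condition on `U = u`: `Z ⊥ η | U` splits `P(z, e, u)` as `P(z, u) P(e, u) / P(u)`,
`Z ⊥ U | T` rewrites `P(z, u)` as `P(z) P(u, t) / P(t)`, and `T ⊥ η | U` recombines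
`P(u, t) P(e, u) / P(u)` into `P(e, t, u)`. Summing over `u` gives `P(z, e) P(t) = P(z) P(e, t)`.
-/

open Finset

section Pr

variable {Ω : Type*} [Fintype Ω] (p : Ω → ℝ)

lemma pr_congr {E F : Ω → Prop} (h : ∀ ω, E ω ↔ F ω) : pr p E = pr p F :=
  congrArg (pr p) (funext fun ω => propext (h ω))

open Classical in
lemma pr_eq_zero {E : Ω → Prop} (h : ∀ ω, ¬ E ω) : pr p E = 0 :=
  sum_eq_zero fun ω _ => if_neg (h ω)

open Classical in
lemma pr_pos (hp : ∀ ω, 0 < p ω) {E : Ω → Prop} (h : ∃ ω, E ω) : 0 < pr p E := by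
  obtain ⟨ω₀, hω₀⟩ := h
  refine sum_pos' (fun ω _ => ?_) ⟨ω₀, mem_univ _, by simp [hω₀, hp ω₀]⟩
  split_ifs
  exacts [(hp ω).le, le_rfl]

open Classical in
lemma sum_pr_and_eq {V : Type*} (f : Ω → V) (E : Ω → Prop) :
    ∑ v ∈ univ.image f, pr p (fun ω => E ω ∧ f ω = v) = pr p E := by
  unfold pr
  rw [sum_comm]
  refine sum_congr rfl fun ω _ => ?_
  by_cases hE : E ω <;> simp [hE]

open Classical in
lemma pr_eq_and_comp {α β : Type*} (X : Ω → α) (g : α → β) (x : α) (a : β) (E : Ω → Prop) :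
    pr p (fun ω => X ω = x ∧ g (X ω) = a ∧ E ω)
      = if g x = a then pr p (fun ω => X ω = x ∧ E ω) else 0 := by
  split_ifs with h
  · exact pr_congr p fun ω => ⟨fun ⟨hx, _, hE⟩ => ⟨hx, hE⟩, fun ⟨hx, hE⟩ => ⟨hx, hx ▸ h, hE⟩⟩
  · exact pr_eq_zero p fun ω ⟨hx, ha, _⟩ => h (hx ▸ ha)

end Pr

/-- `P(X, Y | W) = P(X | W) P(Y | W)` multiplied through by `P(W)²`, hence meaningful also where
`P(W = w) = 0`. -/
def CondIndepFun {Ω α β γ : Type*} [Fintype Ω] (p : Ω → ℝ)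
    (X : Ω → α) (Y : Ω → β) (W : Ω → γ) : Prop :=
  ∀ x y w, pr p (fun ω => X ω = x ∧ Y ω = y ∧ W ω = w) * pr p (fun ω => W ω = w)
    = pr p (fun ω => X ω = x ∧ W ω = w) * pr p (fun ω => Y ω = y ∧ W ω = w)

namespace CondIndepFun

variable {Ω α β γ δ : Type*} [Fintype Ω] {p : Ω → ℝ}
  {X : Ω → α} {Y : Ω → β} {W : Ω → γ}

open Classical in
theorem comp_left (h : CondIndepFun p X Y W) (g : α → δ) : CondIndepFun p (g ∘ X) Y W := by
  intro a y w
  have hfiber (E : Ω → Prop) : pr p (fun ω => g (X ω) = a ∧ E ω)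
      = ∑ x ∈ univ.image X, if g x = a then pr p (fun ω => X ω = x ∧ E ω) else 0 := by
    rw [← sum_pr_and_eq p X]
    refine sum_congr rfl fun x _ => ?_
    rw [← pr_eq_and_comp]
    exact pr_congr p fun ω => by tauto
  simp only [Function.comp_apply]
  rw [hfiber, hfiber, sum_mul, sum_mul]
  refine sum_congr rfl fun x _ => ?_
  split_ifs
  exacts [h x y w, by ring]

theorem of_condIndepFun_comp (hp : ∀ ω, 0 < p ω) (f : α → δ)
    (hXYW : CondIndepFun p X Y W) (hXWf : CondIndepFun p X W (f ∘ X)) :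
    CondIndepFun p X Y (f ∘ X) := by
  intro x y t
  simp only [Function.comp_apply]
  by_cases hxt : f x = t
  swap
  · rw [pr_eq_zero p (E := fun ω => X ω = x ∧ Y ω = y ∧ f (X ω) = t)
        fun ω h => hxt (h.1 ▸ h.2.2),
      pr_eq_zero p (E := fun ω => X ω = x ∧ f (X ω) = t) fun ω h => hxt (h.1 ▸ h.2),
      zero_mul, zero_mul]
  have hdrop (E : Ω → Prop) :
      pr p (fun ω => X ω = x ∧ E ω ∧ f (X ω) = t) = pr p (fun ω => X ω = x ∧ E ω) :=
    pr_congr p fun ω => ⟨fun h => ⟨h.1, h.2.1⟩, fun h => ⟨h.1, h.2, h.1 ▸ hxt⟩⟩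
  have hXt : pr p (fun ω => X ω = x ∧ f (X ω) = t) = pr p (fun ω => X ω = x) :=
    pr_congr p fun ω => ⟨fun h => h.1, fun h => ⟨h, h ▸ hxt⟩⟩
  have hXW (w : γ) : pr p (fun ω => X ω = x ∧ W ω = w) * pr p (fun ω => f (X ω) = t)
      = pr p (fun ω => X ω = x) * pr p (fun ω => f (X ω) = t ∧ W ω = w) := by
    have h := hXWf x w t
    simp only [Function.comp_apply] at h
    rwa [hdrop, hXt, pr_congr p (E := fun ω => W ω = w ∧ f (X ω) = t) fun ω => and_comm] at h
  have htYW (w : γ) : pr p (fun ω => f (X ω) = t ∧ Y ω = y ∧ W ω = w) * pr p (fun ω => W ω = w)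
      = pr p (fun ω => f (X ω) = t ∧ W ω = w) * pr p (fun ω => Y ω = y ∧ W ω = w) :=
    hXYW.comp_left f t y w
  classical
  rw [hdrop, hXt, pr_congr p (E := fun ω => Y ω = y ∧ f (X ω) = t) fun ω => and_comm,
    ← sum_pr_and_eq p W, ← sum_pr_and_eq p W (fun ω => f (X ω) = t ∧ Y ω = y), sum_mul, mul_sum]
  simp only [and_assoc]
  refine sum_congr rfl fun w hw => ?_
  obtain ⟨ω₀, -, rfl⟩ := mem_image.mp hw
  refine mul_right_cancel₀ (pr_pos p hp (E := fun ω => W ω = W ω₀) ⟨ω₀, rfl⟩).ne' ?_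
  linear_combination pr p (fun ω => f (X ω) = t) * hXYW x y (W ω₀)
    + pr p (fun ω => Y ω = y ∧ W ω = W ω₀) * hXW (W ω₀) - pr p (fun ω => X ω = x) * htYW (W ω₀)

end CondIndepFun

theorem Z_indep_eta_given_T_general {Ω 𝓩 𝓔 𝓤 𝓣 : Type*} [Fintype Ω]
    (p : Ω → ℝ) (hp : ∀ ω, 0 < p ω)
    (Z : Ω → 𝓩) (η : Ω → 𝓔) (U : Ω → 𝓤) (τ : 𝓩 → 𝓣)
    -- Z ⊥ η | U
    (hZηU : ∀ (z : 𝓩) (e : 𝓔) (u : 𝓤),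
      pr p (fun ω => Z ω = z ∧ η ω = e ∧ U ω = u) * pr p (fun ω => U ω = u)
        = pr p (fun ω => Z ω = z ∧ U ω = u) * pr p (fun ω => η ω = e ∧ U ω = u))
    -- Z ⊥ U | T, where T = τ ∘ Z
    (hZUT : ∀ (z : 𝓩) (u : 𝓤) (t : 𝓣),
      pr p (fun ω => Z ω = z ∧ U ω = u ∧ τ (Z ω) = t) * pr p (fun ω => τ (Z ω) = t)
        = pr p (fun ω => Z ω = z ∧ τ (Z ω) = t) * pr p (fun ω => U ω = u ∧ τ (Z ω) = t)) :
    -- conclusion: Z ⊥ η | T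
    ∀ (z : 𝓩) (e : 𝓔) (t : 𝓣),
      pr p (fun ω => Z ω = z ∧ η ω = e ∧ τ (Z ω) = t) * pr p (fun ω => τ (Z ω) = t)
        = pr p (fun ω => Z ω = z ∧ τ (Z ω) = t) * pr p (fun ω => η ω = e ∧ τ (Z ω) = t) :=
  CondIndepFun.of_condIndepFun_comp hp τ hZηU hZUT

/-- for discrete random variables with `T = τ(Z)`, if `Z ⊥ η | U`
and `Z ⊥ U | T`, then `Z ⊥ η | T`.  (Conditional independence via
cross-multiplied factorization of conditional pmfs.) -/
theorem Z_indep_eta_given_T {Ω 𝓩 𝓔 𝓤 𝓣 : Type*} [Fintype Ω]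
    (p : Ω → ℝ) (hp : ∀ ω, 0 < p ω) (hsum : ∑ ω, p ω = 1)
    (Z : Ω → 𝓩) (η : Ω → 𝓔) (U : Ω → 𝓤) (τ : 𝓩 → 𝓣)
    -- Z ⊥ η | U
    (hZηU : ∀ (z : 𝓩) (e : 𝓔) (u : 𝓤),
      pr p (fun ω => Z ω = z ∧ η ω = e ∧ U ω = u) * pr p (fun ω => U ω = u)
        = pr p (fun ω => Z ω = z ∧ U ω = u) * pr p (fun ω => η ω = e ∧ U ω = u))
    -- Z ⊥ U | T, where T = τ ∘ Z
    (hZUT : ∀ (z : 𝓩) (u : 𝓤) (t : 𝓣),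
      pr p (fun ω => Z ω = z ∧ U ω = u ∧ τ (Z ω) = t) * pr p (fun ω => τ (Z ω) = t)
        = pr p (fun ω => Z ω = z ∧ τ (Z ω) = t) * pr p (fun ω => U ω = u ∧ τ (Z ω) = t)) :
    -- conclusion: Z ⊥ η | T
    ∀ (z : 𝓩) (e : 𝓔) (t : 𝓣),
      pr p (fun ω => Z ω = z ∧ η ω = e ∧ τ (Z ω) = t) * pr p (fun ω => τ (Z ω) = t)
        = pr p (fun ω => Z ω = z ∧ τ (Z ω) = t) * pr p (fun ω => η ω = e ∧ τ (Z ω) = t) :=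
  Z_indep_eta_given_T_general p hp Z η U τ hZηU hZUT
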